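/- arXiv:2305.07638 — 4 statements merged into one kernel-verified Lean document; each statement's English description precedes it below -/
import Mathlib

section
/- For any square matrix C ∈ ℝ^{n×n} and any subset S ⊆ {1,…,n} with |S| = 2, the nuclear norm satisfies ‖C‖_* ≥ Σ_{i ∉ S} |C_{ii}| + ‖C_{S,S}‖_*, where C_{S,S} is the 2×2 principal submatrix of C indexed by S. -/
open Matrix

/-- Singular values of a real matrix: square roots of eigenvalues of `C * Cᴴ`. -/
noncomputable def singularValues {n m : ℕ} (C : Matrix (Fin n) (Fin m) ℝ) : Fin n → ℝ :=
  fun i => Real.sqrt ((Matrix.isHermitian_mul_conjTranspose_self C).eigenvalues i)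

/-- The nuclear norm of a real square matrix: the sum of its singular values. -/
noncomputable def nuclearNorm {n : ℕ} (C : Matrix (Fin n) (Fin n) ℝ) : ℝ :=
  ∑ i, singularValues C i

/-!
The nuclear norm is dual to the operator norm: `tr (Wᴴ C) ≤ ‖C‖_*` for every contraction `W`
(`W Wᴴ ≤ 1` in the Loewner order), with equality for `W = (C Cᴴ)^{-1/2} C`. Take such an
optimal `W₂` for `C_{S,S}` and extend it to an `n × n` matrix `W` by placing `W₂` on `S × S`
and `sign C_ii` on the remaining diagonal entries. `W` is still a contraction, and
`tr (Wᴴ C) = ‖C_{S,S}‖_* + Σ_{i ∉ S} |C_ii|`.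
-/

open scoped MatrixOrder

namespace Matrix

section Loewner

variable {l m : Type*}

theorem mul_mul_conjTranspose_le_mul_mul_conjTranspose [Fintype l] [Fintype m]
    {A B : Matrix m m ℝ} (h : A ≤ B) (X : Matrix l m ℝ) : X * A * Xᴴ ≤ X * B * Xᴴ := by
  rw [le_iff] at h ⊢
  simpa only [Matrix.mul_sub, Matrix.sub_mul] using h.mul_mul_conjTranspose_same X

theorem diag_le_diag_of_le {A B : Matrix m m ℝ} (h : A ≤ B) (i : m) : A i i ≤ B i i :=
  sub_nonneg.mp (le_iff.mp h).diag_nonneg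

theorem diagonal_le_diagonal [DecidableEq m] {d d' : m → ℝ} (h : ∀ i, d i ≤ d' i) :
    diagonal d ≤ diagonal d' := by
  rw [le_iff, diagonal_sub, posSemidef_diagonal_iff]
  exact fun i => sub_nonneg.mpr (h i)

end Loewner

theorem conjTranspose_mul_apply_le_sqrt_mul_sqrt {l m : Type*} [Fintype l]
    (X Y : Matrix l m ℝ) (i : m) :
    (Xᴴ * Y) i i ≤ √((Xᴴ * X) i i) * √((Yᴴ * Y) i i) := by
  simpa [mul_apply, sq] using Real.sum_mul_le_sqrt_mul_sqrt Finset.univ (X · i) (Y · i)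

theorem IsHermitian.conjTranspose_eigenvectorUnitary_mul_mul_eq_diagonal {m : Type*}
    [Fintype m] [DecidableEq m] {A : Matrix m m ℝ} (hA : A.IsHermitian) :
    (hA.eigenvectorUnitary : Matrix m m ℝ)ᴴ * A * hA.eigenvectorUnitary =
      diagonal hA.eigenvalues := by
  simpa [star_eq_conjTranspose] using hA.conjStarAlgAut_star_eigenvectorUnitary

section Inclusion

variable {l m : Type*} [DecidableEq m] (e : l → m)

def inclusionMatrix : Matrix m l ℝ := (1 : Matrix m m ℝ).submatrix id e

theorem inclusionMatrix_apply (i : m) (a : l) :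
    inclusionMatrix e i a = if i = e a then 1 else 0 :=
  one_apply

theorem conjTranspose_inclusionMatrix :
    (inclusionMatrix e)ᴴ = (1 : Matrix m m ℝ).submatrix e id := by
  simp [inclusionMatrix]

theorem inclusionMatrix_mul_conjTranspose_self [Fintype l] (he : Function.Injective e) :
    inclusionMatrix e * (inclusionMatrix e)ᴴ = diagonal ((Set.range e).indicator 1) := by
  ext i j
  simp only [mul_apply, conjTranspose_apply, inclusionMatrix_apply, diagonal_apply, Set.indicator]
  by_cases hi : i ∈ Set.range e
  · obtain ⟨a, rfl⟩ := hi
    rw [Finset.sum_eq_single a (fun b _ hb => by simp [(he.ne hb).symm]) (by simp)]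
    simp [eq_comm]
  · have : ∀ a, i ≠ e a := fun a h => hi ⟨a, h.symm⟩
    simp [hi, this]

variable [Fintype m]

theorem conjTranspose_inclusionMatrix_mul {n : Type*} (M : Matrix m n ℝ) :
    (inclusionMatrix e)ᴴ * M = M.submatrix e id := by
  rw [conjTranspose_inclusionMatrix, ← Equiv.coe_refl, one_submatrix_mul]
  rfl

theorem mul_inclusionMatrix {n : Type*} (M : Matrix n m ℝ) :
    M * inclusionMatrix e = M.submatrix id e := by
  rw [inclusionMatrix, ← Equiv.coe_refl, mul_submatrix_one]
  rfl

theorem conjTranspose_inclusionMatrix_mul_mul (M : Matrix m m ℝ) :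
    (inclusionMatrix e)ᴴ * M * inclusionMatrix e = M.submatrix e e := by
  rw [conjTranspose_inclusionMatrix_mul, mul_inclusionMatrix, submatrix_submatrix]
  rfl

theorem conjTranspose_inclusionMatrix_mul_self [DecidableEq l] (he : Function.Injective e) :
    (inclusionMatrix e)ᴴ * inclusionMatrix e = 1 := by
  rw [← Matrix.mul_one (inclusionMatrix e)ᴴ, conjTranspose_inclusionMatrix_mul_mul,
    submatrix_one _ he]

theorem conjTranspose_inclusionMatrix_mul_diagonal {s : m → ℝ} (hs : ∀ a, s (e a) = 0) :
    (inclusionMatrix e)ᴴ * diagonal s = 0 := by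
  ext a j
  by_cases h : j = e a
  · simp [h, hs]
  · simp [inclusionMatrix_apply, h]

end Inclusion

section ExtendByDiagonal

variable {l m : Type*} [Fintype l] [Fintype m] [DecidableEq m] {e : l → m}

def extendByDiagonal (e : l → m) (W : Matrix l l ℝ) (s : m → ℝ) : Matrix m m ℝ :=
  inclusionMatrix e * W * (inclusionMatrix e)ᴴ + diagonal s

theorem extendByDiagonal_mul_conjTranspose_le_one [DecidableEq l] (he : Function.Injective e)
    {W : Matrix l l ℝ} (hW : W * Wᴴ ≤ 1) {s : m → ℝ} (hs : ∀ i, s i ^ 2 ≤ 1)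
    (hse : ∀ a, s (e a) = 0) :
    extendByDiagonal e W s * (extendByDiagonal e W s)ᴴ ≤ 1 := by
  set E := inclusionMatrix e with hE
  have hEE (X : Matrix l m ℝ) : Eᴴ * (E * X) = X := by
    rw [← Matrix.mul_assoc, conjTranspose_inclusionMatrix_mul_self e he, Matrix.one_mul]
  have hED : Eᴴ * diagonal s = 0 := conjTranspose_inclusionMatrix_mul_diagonal e hse
  have hDE (X : Matrix l m ℝ) : diagonal s * (E * X) = 0 := by
    have := congrArg conjTranspose hED
    rw [conjTranspose_mul, conjTranspose_conjTranspose, diagonal_conjTranspose, star_trivial,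
      conjTranspose_zero] at this
    rw [← Matrix.mul_assoc, this, Matrix.zero_mul]
  calc extendByDiagonal e W s * (extendByDiagonal e W s)ᴴ
      = E * (W * Wᴴ) * Eᴴ + diagonal (fun i => s i ^ 2) := by
        simp only [extendByDiagonal, ← hE, conjTranspose_add, conjTranspose_mul,
          conjTranspose_conjTranspose, diagonal_conjTranspose, star_trivial, Matrix.add_mul,
          Matrix.mul_add, Matrix.mul_assoc, hEE, hDE, hED, Matrix.mul_zero, zero_add, add_zero,
          diagonal_mul_diagonal, sq]
    _ ≤ E * (1 : Matrix l l ℝ) * Eᴴ + diagonal ((Set.range e)ᶜ.indicator 1) := by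
        refine add_le_add (mul_mul_conjTranspose_le_mul_mul_conjTranspose hW E)
          (diagonal_le_diagonal fun i => ?_)
        by_cases hi : i ∈ Set.range e
        · obtain ⟨a, rfl⟩ := hi
          simp [hse]
        · simpa [hi] using hs i
    _ = 1 := by
        rw [Matrix.mul_one, inclusionMatrix_mul_conjTranspose_self e he, diagonal_add]
        simp only [Set.indicator_self_add_compl_apply, Pi.one_apply, diagonal_one]

theorem trace_conjTranspose_extendByDiagonal_mul (W : Matrix l l ℝ) (s : m → ℝ)
    (C : Matrix m m ℝ) :
    trace ((extendByDiagonal e W s)ᴴ * C) = trace (Wᴴ * C.submatrix e e) + ∑ i, s i * C i i := by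
  rw [extendByDiagonal, conjTranspose_add, Matrix.add_mul, trace_add, conjTranspose_mul,
    conjTranspose_mul, conjTranspose_conjTranspose, Matrix.mul_assoc, trace_mul_comm,
    ← conjTranspose_inclusionMatrix_mul_mul, diagonal_conjTranspose]
  simp [trace, diagonal_mul, Matrix.mul_assoc]

end ExtendByDiagonal

end Matrix

section NuclearNormDuality

variable {m : ℕ}

theorem trace_conjTranspose_mul_le_nuclearNorm (C W : Matrix (Fin m) (Fin m) ℝ)
    (hW : W * Wᴴ ≤ 1) : trace (Wᴴ * C) ≤ nuclearNorm C := by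
  set hCC := isHermitian_mul_conjTranspose_self C
  set U : Matrix (Fin m) (Fin m) ℝ := ↑hCC.eigenvectorUnitary
  have hU : U * Uᴴ = 1 := Unitary.coe_mul_star_self hCC.eigenvectorUnitary
  have hUU : Uᴴ * U = 1 := Unitary.coe_star_mul_self hCC.eigenvectorUnitary
  have htrace : trace (Wᴴ * C) = trace ((Cᴴ * U)ᴴ * (Wᴴ * U)) := by
    rw [conjTranspose_mul, conjTranspose_conjTranspose, Matrix.mul_assoc, trace_mul_comm Uᴴ,
      Matrix.mul_assoc, Matrix.mul_assoc, hU, Matrix.mul_one, trace_mul_comm]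
  have hgram (M : Matrix (Fin m) (Fin m) ℝ) : (Mᴴ * U)ᴴ * (Mᴴ * U) = Uᴴ * (M * Mᴴ) * U := by
    simp only [conjTranspose_mul, conjTranspose_conjTranspose, Matrix.mul_assoc]
  have hC (i : Fin m) : ((Cᴴ * U)ᴴ * (Cᴴ * U)) i i = hCC.eigenvalues i := by
    rw [hgram, hCC.conjTranspose_eigenvectorUnitary_mul_mul_eq_diagonal, diagonal_apply_eq]
  have hW (i : Fin m) : ((Wᴴ * U)ᴴ * (Wᴴ * U)) i i ≤ 1 := by
    simpa only [hgram, Matrix.mul_one, conjTranspose_conjTranspose, hUU, one_apply_eq] using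
      diag_le_diag_of_le (mul_mul_conjTranspose_le_mul_mul_conjTranspose hW Uᴴ) i
  rw [htrace, trace, nuclearNorm]
  gcongr with i
  calc ((Cᴴ * U)ᴴ * (Wᴴ * U)) i i
      ≤ √(((Cᴴ * U)ᴴ * (Cᴴ * U)) i i) * √(((Wᴴ * U)ᴴ * (Wᴴ * U)) i i) :=
        conjTranspose_mul_apply_le_sqrt_mul_sqrt _ _ i
    _ ≤ singularValues C i * 1 := by
        rw [hC]
        exact mul_le_mul_of_nonneg_left (Real.sqrt_le_one.mpr (hW i)) (Real.sqrt_nonneg _)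
    _ = singularValues C i := mul_one _

theorem exists_trace_conjTranspose_mul_eq_nuclearNorm (A : Matrix (Fin m) (Fin m) ℝ) :
    ∃ W : Matrix (Fin m) (Fin m) ℝ, W * Wᴴ ≤ 1 ∧ trace (Wᴴ * A) = nuclearNorm A := by
  set hAA := isHermitian_mul_conjTranspose_self A
  set U : Matrix (Fin m) (Fin m) ℝ := ↑hAA.eigenvectorUnitary
  set μ := hAA.eigenvalues
  have hU : U * Uᴴ = 1 := Unitary.coe_mul_star_self hAA.eigenvectorUnitary
  have hμ : ∀ i, 0 ≤ μ i := (posSemidef_self_mul_conjTranspose A).eigenvalues_nonneg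
  have hdiag : Uᴴ * (A * Aᴴ) * U = diagonal μ :=
    hAA.conjTranspose_eigenvectorUnitary_mul_mul_eq_diagonal
  -- `(√0)⁻¹ = 0`, so `U * diagonal d * Uᴴ` is the pseudo-inverse square root of `A * Aᴴ`
  set d : Fin m → ℝ := fun i => (√(μ i))⁻¹
  refine ⟨U * diagonal d * Uᴴ * A, ?_, ?_⟩
  · calc U * diagonal d * Uᴴ * A * (U * diagonal d * Uᴴ * A)ᴴ
        = U * (diagonal d * (Uᴴ * (A * Aᴴ) * U) * diagonal d) * Uᴴ := by
          simp only [conjTranspose_mul, conjTranspose_conjTranspose, diagonal_conjTranspose,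
            star_trivial, Matrix.mul_assoc]
      _ = U * diagonal (fun i => μ i / √(μ i) ^ 2) * Uᴴ := by
          rw [hdiag, diagonal_mul_diagonal, diagonal_mul_diagonal]
          congr; funext i
          ring
      _ ≤ U * 1 * Uᴴ := by
          refine mul_mul_conjTranspose_le_mul_mul_conjTranspose ?_ U
          rw [← diagonal_one]
          exact diagonal_le_diagonal fun i => by
            rw [Real.sq_sqrt (hμ i)]
            exact div_self_le_one _
      _ = 1 := by rw [Matrix.mul_one, hU]
  · calc trace ((U * diagonal d * Uᴴ * A)ᴴ * A)
        = trace (diagonal d * (Uᴴ * (A * Aᴴ) * U)) := by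
          simp only [conjTranspose_mul, conjTranspose_conjTranspose, diagonal_conjTranspose,
            star_trivial, Matrix.mul_assoc]
          rw [trace_mul_comm, Matrix.mul_assoc, trace_mul_comm U]
          simp only [Matrix.mul_assoc]
      _ = nuclearNorm A := by
          rw [hdiag, diagonal_mul_diagonal, trace_diagonal]
          simp only [nuclearNorm, singularValues, d, inv_mul_eq_div, Real.div_sqrt]
          rfl

end NuclearNormDuality

theorem sum_abs_diag_compl_add_nuclearNorm_submatrix_le {k n : ℕ}
    (C : Matrix (Fin n) (Fin n) ℝ) (e : Fin k → Fin n) (he : Function.Injective e) :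
    ∑ i ∈ Finset.univ \ Finset.univ.image e, |C i i| + nuclearNorm (C.submatrix e e) ≤
      nuclearNorm C := by
  obtain ⟨W, hW, hWC⟩ := exists_trace_conjTranspose_mul_eq_nuclearNorm (C.submatrix e e)
  set s : Fin n → ℝ := (Set.range e)ᶜ.indicator fun i => (SignType.sign (C i i) : ℝ)
  have hs (i : Fin n) : s i ^ 2 ≤ 1 := by
    by_cases hi : i ∈ Set.range e
    · simp [s, hi]
    · rcases lt_trichotomy (C i i) 0 with h | h | h <;> simp [s, hi, h]
  have hse (a : Fin k) : s (e a) = 0 := by simp [s]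
  calc ∑ i ∈ Finset.univ \ Finset.univ.image e, |C i i| + nuclearNorm (C.submatrix e e)
      = trace ((extendByDiagonal e W s)ᴴ * C) := by
        rw [trace_conjTranspose_extendByDiagonal_mul, hWC, add_comm (nuclearNorm _),
          Finset.sdiff_eq_filter, Finset.sum_filter]
        congr 1
        refine Finset.sum_congr rfl fun i _ => ?_
        by_cases hi : ∃ a, e a = i
        · obtain ⟨a, rfl⟩ := hi
          simp [hse]
        · simp_all [s]
    _ ≤ nuclearNorm C := trace_conjTranspose_mul_le_nuclearNorm C _
        (extendByDiagonal_mul_conjTranspose_le_one he hW hs hse)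

/-- **Lemma.** For any square matrix `C ∈ ℝ^{n×n}` and any two-element subset
`S = {e 0, e 1}` of the index set (given by an injection `e : Fin 2 → Fin n`),
`‖C‖_* ≥ Σ_{i ∉ S} |C_{ii}| + ‖C_{S,S}‖_*`, where `C_{S,S}` is the `2 × 2`
principal submatrix of `C` indexed by `S`. -/
theorem sum_abs_diag_add_submatrix_le_nuclearNorm {n : ℕ}
    (C : Matrix (Fin n) (Fin n) ℝ) (e : Fin 2 → Fin n) (he : Function.Injective e) :
    (∑ i ∈ Finset.univ \ {e 0, e 1}, |C i i|) + nuclearNorm (C.submatrix e e)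
      ≤ nuclearNorm C := by
  have hS : Finset.univ.image e = {e 0, e 1} := by
    rw [show (Finset.univ : Finset (Fin 2)) = {0, 1} by decide]
    simp
  simpa [hS] using sum_abs_diag_compl_add_nuclearNorm_submatrix_le C e he
end

section
/- Let D = {X ∈ 𝕊₊ⁿ : rank(X) ≤ k, f(‖X‖_*) ≤ 0} where k ≥ 2 and f : ℝ → ℝ is convex with bounded sublevel set {t : f(t) ≤ 0}. Then every extreme point of conv(D) has rank at most 1; equivalently, conv(D) equals the convex hull of {X ∈ 𝕊₊ⁿ : rank(X) ≤ 1, f(‖X‖_*) ≤ 0}. -/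
open Matrix

/-!
A positive semidefinite matrix is a sum of rank-one positive semidefinite matrices, and rescaling
these summands to the trace of the whole matrix exhibits it as a convex combination of rank-one
positive semidefinite matrices of the same trace. On the positive semidefinite cone the nuclear
norm is the trace, so each member of `D` lies in the convex hull of its rank-one members.
-/

theorem Finset.sum_mem_convexHull_slice {E ι : Type*} [AddCommGroup E] [Module ℝ E]
    (φ : E →ₗ[ℝ] ℝ) {C : Set E} (hC : ∀ y ∈ C, ∀ c : ℝ, 0 < c → c • y ∈ C)
    {s : Finset ι} (hs : s.Nonempty) {y : ι → E} (hyC : ∀ i ∈ s, y i ∈ C)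
    (hφ : ∀ i ∈ s, 0 < φ (y i)) :
    ∑ i ∈ s, y i ∈ convexHull ℝ {z ∈ C | φ z = φ (∑ i ∈ s, y i)} := by
  set t := φ (∑ i ∈ s, y i)
  have ht : t = ∑ i ∈ s, φ (y i) := map_sum φ y s
  have ht_pos : 0 < t := ht ▸ Finset.sum_pos hφ hs
  have hy : ∑ i ∈ s, y i = ∑ i ∈ s, (φ (y i) / t) • ((t / φ (y i)) • y i) :=
    Finset.sum_congr rfl fun i hi => by
      rw [smul_smul, div_mul_div_comm, mul_comm (φ (y i)), div_self (by positivity [hφ i hi]),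
        one_smul]
  rw [hy]
  refine (convex_convexHull ℝ _).sum_mem (fun i hi => (div_pos (hφ i hi) ht_pos).le) ?_
    fun i hi => subset_convexHull ℝ _ ⟨hC _ (hyC i hi) _ (div_pos ht_pos (hφ i hi)), ?_⟩
  · rw [← Finset.sum_div, ← ht, div_self ht_pos.ne']
  · rw [map_smul, smul_eq_mul, div_mul_cancel₀ _ (hφ i hi).ne']

theorem Matrix.PosSemidef.mem_convexHull_rank_le_one {n : Type*} [Fintype n]
    {X : Matrix n n ℝ} (hX : X.PosSemidef) :
    X ∈ convexHull ℝ {Y | Y.PosSemidef ∧ Y.rank ≤ 1 ∧ Y.trace = X.trace} := by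
  classical
  obtain rfl | hX0 := eq_or_ne X 0
  · exact subset_convexHull ℝ _ ⟨hX, by simp, rfl⟩
  obtain ⟨m, v, rfl⟩ := posSemidef_iff_eq_sum_vecMulVec.mp hX
  rw [← Finset.sum_filter_ne_zero] at hX0 ⊢
  have hterm (i : Fin m) : (vecMulVec (v i) (star (v i))).PosSemidef :=
    posSemidef_vecMulVec_self_star _
  have hcone : ∀ Y ∈ {Y : Matrix n n ℝ | Y.PosSemidef ∧ Y.rank ≤ 1}, ∀ c : ℝ, 0 < c →
      c • Y ∈ {Y : Matrix n n ℝ | Y.PosSemidef ∧ Y.rank ≤ 1} := fun Y ⟨hY, hr⟩ c hc =>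
    ⟨hY.smul hc.le,
      (rank_smul_of_mem_nonZeroDivisors Y (mem_nonZeroDivisors_of_ne_zero hc.ne')).le.trans hr⟩
  have hpos (i : Fin m) (hi : vecMulVec (v i) (star (v i)) ≠ 0) :
      0 < (vecMulVec (v i) (star (v i))).trace :=
    (hterm i).trace_nonneg.lt_of_ne fun h => hi ((hterm i).trace_eq_zero_iff.mp h.symm)
  refine convexHull_mono ?_ <|
    Finset.sum_mem_convexHull_slice (traceLinearMap n ℝ ℝ) hcone
      (Finset.nonempty_of_sum_ne_zero hX0) (fun i _ => ⟨hterm i, rank_vecMulVec_le _ _⟩)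
      fun i hi => hpos i (Finset.mem_filter.mp hi).2
  exact fun Y ⟨⟨hY, hr⟩, htr⟩ => ⟨hY, hr, htr⟩

theorem Matrix.IsHermitian.trace_cfc {𝕜 n : Type*} [RCLike 𝕜] [Fintype n] [DecidableEq n]
    {A : Matrix n n 𝕜} (hA : A.IsHermitian) (f : ℝ → ℝ) :
    (hA.cfc f).trace = ∑ i, (f (hA.eigenvalues i) : 𝕜) := by
  rw [IsHermitian.cfc, Unitary.conjStarAlgAut_apply, trace_mul_cycle, Unitary.coe_star_mul_self,
    one_mul, trace_diagonal]
  rfl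

open scoped MatrixOrder in
theorem Matrix.PosSemidef.nuclearNorm_eq_trace {n : ℕ} {X : Matrix (Fin n) (Fin n) ℝ}
    (hX : X.PosSemidef) : nuclearNorm X = X.trace := by
  have hsqrt : (isHermitian_mul_conjTranspose_self X).cfc Real.sqrt = X := by
    -- found by the `cfc_tac` side goals of `CFC.sqrt_mul_self` and `CFC.sqrt_eq_real_sqrt`
    have h0 : 0 ≤ X := nonneg_iff_posSemidef.mpr hX
    rw [← IsHermitian.cfc_eq, hX.1.eq]
    conv_rhs => rw [← CFC.sqrt_mul_self X, CFC.sqrt_eq_real_sqrt (X * X), cfcₙ_eq_cfc]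
  conv_rhs => rw [← hsqrt, IsHermitian.trace_cfc]
  rfl

theorem extremePoint_rank_le_one_of_nuclearNorm_constraint_general
    (n k : ℕ) (hk : 2 ≤ k) (f : ℝ → ℝ) :
    (∀ X ∈ Set.extremePoints ℝ (convexHull ℝ
        {X : Matrix (Fin n) (Fin n) ℝ | X.PosSemidef ∧ X.rank ≤ k ∧ f (nuclearNorm X) ≤ 0}),
      X.rank ≤ 1)
    ∧ convexHull ℝ
        {X : Matrix (Fin n) (Fin n) ℝ | X.PosSemidef ∧ X.rank ≤ k ∧ f (nuclearNorm X) ≤ 0}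
      = convexHull ℝ
        {X : Matrix (Fin n) (Fin n) ℝ | X.PosSemidef ∧ X.rank ≤ 1 ∧ f (nuclearNorm X) ≤ 0} := by
  set Dk := {X : Matrix (Fin n) (Fin n) ℝ | X.PosSemidef ∧ X.rank ≤ k ∧ f (nuclearNorm X) ≤ 0}
  set D1 := {X : Matrix (Fin n) (Fin n) ℝ | X.PosSemidef ∧ X.rank ≤ 1 ∧ f (nuclearNorm X) ≤ 0}
  have hDk : Dk ⊆ convexHull ℝ D1 := by
    rintro X ⟨hX, -, hfX⟩
    refine convexHull_mono ?_ hX.mem_convexHull_rank_le_one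
    rintro Y ⟨hY, hrY, htr⟩
    rw [← hX.nuclearNorm_eq_trace, ← hY.nuclearNorm_eq_trace] at htr
    exact ⟨hY, hrY, htr ▸ hfX⟩
  have hD1 : D1 ⊆ Dk := fun X ⟨hX, hr, hfX⟩ => ⟨hX, hr.trans (by omega), hfX⟩
  have heq : convexHull ℝ Dk = convexHull ℝ D1 :=
    (convexHull_min hDk (convex_convexHull ℝ D1)).antisymm (convexHull_mono hD1)
  refine ⟨fun X hX => ?_, heq⟩
  rw [heq] at hX
  exact (extremePoints_convexHull_subset hX).2.1

/-- **Example (strengthened rank `k̃ = 1`).** Let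
`D = {X ∈ 𝕊₊ⁿ : rank X ≤ k, f(‖X‖_*) ≤ 0}` where `k ≥ 2` and `f : ℝ → ℝ` is
convex with bounded sublevel set `{t : f t ≤ 0}`.  Then every extreme point of
`conv D` has rank at most `1`; equivalently, `conv D` equals the convex hull of
the rank-`≤ 1` version of `D`. -/
theorem extremePoint_rank_le_one_of_nuclearNorm_constraint
    (n k : ℕ) (hk : 2 ≤ k) (f : ℝ → ℝ)
    (hconv : ConvexOn ℝ Set.univ f)
    (hbdd : Bornology.IsBounded {t : ℝ | f t ≤ 0}) :
    (∀ X ∈ Set.extremePoints ℝ (convexHull ℝ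
        {X : Matrix (Fin n) (Fin n) ℝ | X.PosSemidef ∧ X.rank ≤ k ∧ f (nuclearNorm X) ≤ 0}),
      X.rank ≤ 1)
    ∧ convexHull ℝ
        {X : Matrix (Fin n) (Fin n) ℝ | X.PosSemidef ∧ X.rank ≤ k ∧ f (nuclearNorm X) ≤ 0}
      = convexHull ℝ
        {X : Matrix (Fin n) (Fin n) ℝ | X.PosSemidef ∧ X.rank ≤ 1 ∧ f (nuclearNorm X) ≤ 0} :=
  extremePoint_rank_le_one_of_nuclearNorm_constraint_general n k hk f
end

section
/- Let T ⊆ ℝᴺ be a closed convex set and let H = {x : ⟨a_i, x⟩ = b_i, i = 1,…,m̃} be the intersection of m̃ linearly independent affine hyperplanes. If x is an extreme point of T ∩ H, then x is contained in a face of T of dimension at most m̃. -/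
/-!
Let `F = T ∩ (x + L)`, where `L` is the lineality space of the cone spanned by `T - x`; this is
the smallest face of `T` containing `x`. Every vector `v` in the direction of `F` lies in `L`, so
it can be followed from `x` both ways inside `T`. If `v` is also parallel to `H`, i.e. in the
kernel of `y ↦ (⟪aᵢ, y⟫)ᵢ`, then `x` lies strictly inside a segment of `T ∩ H` along `v`, so
`v = 0` by extremality. Hence that kernel meets the direction of `F` trivially, and the direction
of `F` embeds into `ℝᵐ`.
-/

open Module Pointwise

section

variable {V W : Type*} [AddCommGroup V] [Module ℝ V] [AddCommGroup W] [Module ℝ W]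

lemma PointedCone.mem_hull_of_convex_of_zero_mem {s : Set V} (hs : Convex ℝ s) (h0 : 0 ∈ s)
    {v : V} : v ∈ PointedCone.hull ℝ s ↔ ∃ r : ℝ, 0 < r ∧ v ∈ r • s := by
  constructor
  · intro hv
    have hle : PointedCone.hull ℝ s ≤
        (ConvexCone.hull ℝ s).toPointedCone (ConvexCone.subset_hull h0) :=
      Submodule.span_le.mpr fun _ hy ↦ ConvexCone.subset_hull hy
    exact (ConvexCone.mem_hull_of_convex hs).mp (hle hv)
  · rintro ⟨r, hr, y, hy, rfl⟩
    exact (PointedCone.hull ℝ s).smul_mem hr.le (PointedCone.subset_hull hy)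

lemma eq_zero_of_add_smul_mem_of_sub_smul_mem {S : Set V} {x v : V}
    (hx : x ∈ S.extremePoints ℝ) {r s : ℝ} (hr : 0 < r) (hs : 0 < s)
    (h₁ : x + r • v ∈ S) (h₂ : x - s • v ∈ S) : v = 0 := by
  have hseg : x ∈ openSegment ℝ (x + r • v) (x - s • v) := by
    refine ⟨s / (r + s), r / (r + s), by positivity, by positivity, by field_simp; ring, ?_⟩
    match_scalars <;> field_simp <;> ring
  simpa [hr.ne'] using hx.2 h₁ h₂ hseg

def feasibleCone (T : Set V) (x : V) : PointedCone ℝ V :=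
  PointedCone.hull ℝ ((· - x) '' T)

def faceAt (T : Set V) (x : V) : Set V :=
  T ∩ AffineSubspace.mk' x (feasibleCone T x).lineal

variable {T : Set V} {x : V}

lemma mem_faceAt {y : V} :
    y ∈ faceAt T x ↔ y ∈ T ∧ y - x ∈ feasibleCone T x ∧ -(y - x) ∈ feasibleCone T x :=
  Iff.rfl

lemma sub_mem_feasibleCone {y : V} (hy : y ∈ T) : y - x ∈ feasibleCone T x :=
  PointedCone.subset_hull ⟨y, hy, rfl⟩

lemma exists_add_smul_mem_of_mem_feasibleCone (hT : Convex ℝ T) (hx : x ∈ T) {v : V}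
    (hv : v ∈ feasibleCone T x) : ∃ r : ℝ, 0 < r ∧ x + r • v ∈ T := by
  have hconv : Convex ℝ ((· - x) '' T) := by
    simpa [sub_eq_neg_add] using hT.translate (-x)
  obtain ⟨r, hr, _, ⟨t, ht, rfl⟩, rfl⟩ :=
    (PointedCone.mem_hull_of_convex_of_zero_mem hconv ⟨x, hx, sub_self x⟩).mp hv
  refine ⟨r⁻¹, inv_pos.mpr hr, ?_⟩
  rwa [inv_smul_smul₀ hr.ne', add_sub_cancel]

lemma isExtreme_faceAt (T : Set V) (x : V) : IsExtreme ℝ T (faceAt T x) := by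
  refine ⟨Set.inter_subset_left, ?_⟩
  rintro y₁ hy₁ y₂ hy₂ p hp ⟨t, t', ht, ht', htt, rfl⟩
  obtain rfl : t' = 1 - t := by linarith
  rw [mem_faceAt] at hp ⊢
  refine ⟨hy₁, sub_mem_feasibleCone hy₁, ?_⟩
  have hdecomp : -(y₁ - x) = -(t • y₁ + (1 - t) • y₂ - x) +
      ((1 - t) / t) • ((y₂ - x) + -(t • y₁ + (1 - t) • y₂ - x)) := by
    match_scalars <;> field_simp <;> ring
  rw [hdecomp]
  exact add_mem hp.2.2 ((feasibleCone T x).smul_mem (by positivity)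
    (add_mem (sub_mem_feasibleCone hy₂) hp.2.2))

lemma convex_faceAt (hT : Convex ℝ T) (x : V) : Convex ℝ (faceAt T x) :=
  hT.inter (AffineSubspace.convex _)

lemma mem_faceAt_self (hx : x ∈ T) : x ∈ faceAt T x :=
  ⟨hx, AffineSubspace.self_mem_mk' _ _⟩

lemma direction_affineSpan_faceAt_le (T : Set V) (x : V) :
    (affineSpan ℝ (faceAt T x)).direction ≤ (feasibleCone T x).lineal :=
  AffineSubspace.direction_mk' x (feasibleCone T x).lineal ▸
    AffineSubspace.direction_le (affineSpan_le.mpr Set.inter_subset_right)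

lemma disjoint_lineal_feasibleCone_ker (hT : Convex ℝ T) (f : V →ₗ[ℝ] W) {b : W}
    (hx : x ∈ (T ∩ f ⁻¹' {b}).extremePoints ℝ) :
    Disjoint (feasibleCone T x).lineal (LinearMap.ker f) := by
  refine Submodule.disjoint_def.mpr fun v hv hfv ↦ ?_
  rw [PointedCone.mem_lineal] at hv
  rw [LinearMap.mem_ker] at hfv
  have hxT : x ∈ T := hx.1.1
  have hfx : f x = b := hx.1.2
  obtain ⟨r, hr, hrT⟩ := exists_add_smul_mem_of_mem_feasibleCone hT hxT hv.1
  obtain ⟨s, hs, hsT⟩ := exists_add_smul_mem_of_mem_feasibleCone hT hxT hv.2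
  rw [smul_neg, ← sub_eq_add_neg] at hsT
  exact eq_zero_of_add_smul_mem_of_sub_smul_mem hx hr hs
    ⟨hrT, by simp [hfx, hfv]⟩ ⟨hsT, by simp [hfx, hfv]⟩

lemma finrank_le_of_disjoint_ker [FiniteDimensional ℝ W] (f : V →ₗ[ℝ] W) {D : Submodule ℝ V}
    (hD : Disjoint D (LinearMap.ker f)) : finrank ℝ D ≤ finrank ℝ W :=
  LinearMap.finrank_le_finrank_of_injective
    (LinearMap.injective_domRestrict_iff.mpr hD)

lemma finrank_direction_affineSpan_faceAt_le [FiniteDimensional ℝ W] (hT : Convex ℝ T)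
    (f : V →ₗ[ℝ] W) {b : W} (hx : x ∈ (T ∩ f ⁻¹' {b}).extremePoints ℝ) :
    finrank ℝ (affineSpan ℝ (faceAt T x)).direction ≤ finrank ℝ W :=
  finrank_le_of_disjoint_ker f ((disjoint_lineal_feasibleCone_ker hT f hx).mono_left
    (direction_affineSpan_faceAt_le T x))

end

theorem extremePoint_mem_low_dim_face_general
    (N m : ℕ) (T : Set (EuclideanSpace ℝ (Fin N)))
    (hTconv : Convex ℝ T)
    (a : Fin m → EuclideanSpace ℝ (Fin N)) (b : Fin m → ℝ)
    (x : EuclideanSpace ℝ (Fin N))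
    (hx : x ∈ Set.extremePoints ℝ
      (T ∩ {y : EuclideanSpace ℝ (Fin N) | ∀ i, (inner ℝ (a i) y : ℝ) = b i})) :
    ∃ F : Set (EuclideanSpace ℝ (Fin N)),
      IsExtreme ℝ T F ∧ Convex ℝ F ∧ x ∈ F ∧
      Module.finrank ℝ (affineSpan ℝ F).direction ≤ m := by
  let A : EuclideanSpace ℝ (Fin N) →ₗ[ℝ] Fin m → ℝ := LinearMap.pi fun i ↦ innerₛₗ ℝ (a i)
  have hH : {y : EuclideanSpace ℝ (Fin N) | ∀ i, (inner ℝ (a i) y : ℝ) = b i} = A ⁻¹' {b} := by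
    ext y
    simp [A, funext_iff]
  rw [hH] at hx
  refine ⟨faceAt T x, isExtreme_faceAt T x, convex_faceAt hTconv x, mem_faceAt_self hx.1.1, ?_⟩
  simpa using finrank_direction_affineSpan_faceAt_le hTconv A hx

/-- **Lemma (extreme points and low-dimensional faces).** Let `T ⊆ ℝᴺ` be a
closed convex set and `H = {x : ⟨aᵢ, x⟩ = bᵢ, i = 1,…,m̃}` the intersection of
`m̃` linearly independent affine hyperplanes.  If `x` is an extreme point of
`T ∩ H`, then `x` is contained in a face of `T` (a convex subset `F ⊆ T`
satisfying the face property, formalized as `IsExtreme ℝ T F`) of dimension at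
most `m̃`, where the dimension of a face is that of its affine hull. -/
theorem extremePoint_mem_low_dim_face
    (N m : ℕ) (T : Set (EuclideanSpace ℝ (Fin N)))
    (hTclosed : IsClosed T) (hTconv : Convex ℝ T)
    (a : Fin m → EuclideanSpace ℝ (Fin N)) (b : Fin m → ℝ)
    (hind : LinearIndependent ℝ a)
    (x : EuclideanSpace ℝ (Fin N))
    (hx : x ∈ Set.extremePoints ℝ
      (T ∩ {y : EuclideanSpace ℝ (Fin N) | ∀ i, (inner ℝ (a i) y : ℝ) = b i})) :
    ∃ F : Set (EuclideanSpace ℝ (Fin N)),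
      IsExtreme ℝ T F ∧ Convex ℝ F ∧ x ∈ F ∧
      Module.finrank ℝ (affineSpan ℝ F).direction ≤ m :=
  extremePoint_mem_low_dim_face_general N m T hTconv a b x hx
end

section
/- Let D = {X ∈ 𝕊ⁿ : X diagonal, rank(X) ≤ k, f(diag(X)) ≤ 0} with f continuous, convex, symmetric and sign-invariant, and let k̃ ≤ k be the strengthened rank. If F^d is a d-dimensional face of conv(D), then every matrix in F^d has rank at most k̃ + d. -/
open Matrix

/-- The sparse (diagonal-matrix) low-rank spectral domain set:
`D_j = {X ∈ 𝕊ⁿ : X diagonal, rank X ≤ j, f(diag X) ≤ 0}`. -/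
def sparseDomainSet (n j : ℕ) (f : (Fin n → ℝ) → ℝ) :
    Set (Matrix (Fin n) (Fin n) ℝ) :=
  {X | X = Matrix.diagonal (Matrix.diag X) ∧ X.rank ≤ j ∧ f (Matrix.diag X) ≤ 0}

/-! Each point of a face `F` of `conv D_k = conv D_k̃` is a convex combination of points of
`D_k̃ ∩ F`. Fix `diagonal y ∈ D_k̃ ∩ F` of maximal support. If `diagonal x ∈ F` and `j` lies in the
support of `x` but not of `y`, some `diagonal z ∈ D_k̃ ∩ F` has `z j ≠ 0`, and by maximality some
`l` lies in the support of `y` but not of `z`. Exchanging the `l`-entry of `y` with the `j`-entry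
of `z`, with absolute values kept, gives two points of `D_k̃` (by the symmetry and sign
invariance of `f`) whose open segment meets that of `diagonal y` and `diagonal z`; so the first
of them lies in `F`, has `j` in its support and is otherwise supported in that of `y`. Their
differences with `diagonal y` are linearly independent in the direction of `F`, whence
`|supp x \ supp y| ≤ d` and `rank (diagonal x) ≤ k̃ + d`. -/

open Function

section Convexity

variable {𝕜 E : Type*} [Semiring 𝕜] [PartialOrder 𝕜] [AddCommMonoid E]
  [Module 𝕜 E]

theorem IsExtreme.inter_convexHull_subset_convexHull_inter {A F t : Set E} (hA : Convex 𝕜 A)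
    (hAF : IsExtreme 𝕜 A F) (htA : t ⊆ A) : F ∩ convexHull 𝕜 t ⊆ convexHull 𝕜 (t ∩ F) := by
  let G := {x ∈ A | x ∈ F → x ∈ convexHull 𝕜 (t ∩ F)}
  have hG : Convex 𝕜 G := by
    refine convex_iff_forall_pos.2 fun x hx y hy a b ha hb hab => ⟨hA hx.1 hy.1 ha.le hb.le hab, ?_⟩
    intro hF
    have hseg : a • x + b • y ∈ openSegment 𝕜 x y := ⟨a, b, ha, hb, hab, rfl⟩
    exact convex_convexHull 𝕜 _ (hx.2 (hAF.left_mem_of_mem_openSegment hx.1 hy.1 hF hseg))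
      (hy.2 (hAF.right_mem_of_mem_openSegment hx.1 hy.1 hF hseg)) ha.le hb.le hab
  have htG : t ⊆ G := fun x hx => ⟨htA hx, fun hxF => subset_convexHull 𝕜 _ ⟨hx, hxF⟩⟩
  rintro x ⟨hxF, hx⟩
  exact (convexHull_min htG hG hx).2 hxF

theorem exists_mem_apply_ne_zero_of_mem_convexHull {M : Type*} [AddCommMonoid M] [Module 𝕜 M]
    (φ : E →ₗ[𝕜] M) {s : Set E} {x : E} (hx : x ∈ convexHull 𝕜 s) (hφx : φ x ≠ 0) :
    ∃ y ∈ s, φ y ≠ 0 := by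
  by_contra! h
  exact hφx (convexHull_min h (LinearMap.ker φ).convex hx)

end Convexity

section SignedPerm

variable {ι : Type*}

def IsSignedPerm (x y : ι → ℝ) : Prop := ∃ σ : Equiv.Perm ι, ∀ i, |x i| = |y (σ i)|

theorem IsSignedPerm.ncard_support_eq {x y : ι → ℝ} (h : IsSignedPerm x y) :
    (support x).ncard = (support y).ncard := by
  obtain ⟨σ, hσ⟩ := h
  have hsupp : support x = σ ⁻¹' support y := by
    ext i
    simp only [mem_support, Set.mem_preimage, ← abs_ne_zero (a := x i), hσ, abs_ne_zero]
  rw [hsupp, Set.ncard_preimage_of_injective_subset_range σ.injective (by simp)]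

theorem IsSignedPerm.apply_eq {g : (ι → ℝ) → ℝ} (hg_symm : ∀ x (σ : Equiv.Perm ι), g (x ∘ σ) = g x)
    (hg_sign : ∀ x, g (fun i => |x i|) = g x) {x y : ι → ℝ} (h : IsSignedPerm x y) : g x = g y := by
  obtain ⟨σ, hσ⟩ := h
  calc g x = g ((fun i => |y i|) ∘ σ) := by rw [← hg_sign x]; exact congrArg g (funext hσ)
    _ = g y := by rw [hg_symm, hg_sign]

variable [DecidableEq ι]

def moveEntry (x : ι → ℝ) (i i' : ι) (s : ℝ) : ι → ℝ := update (update x i 0) i' s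

theorem isSignedPerm_moveEntry {x : ι → ℝ} {i i' : ι} {s : ℝ} (hii' : i ≠ i') (hx : x i' = 0)
    (hs : |s| = |x i|) : IsSignedPerm (moveEntry x i i' s) x := by
  refine ⟨Equiv.swap i i', fun m => ?_⟩
  by_cases hm : m = i'
  · subst hm; simp [moveEntry, hs]
  by_cases hm' : m = i
  · subst hm'; simp [moveEntry, hm, hx]
  · simp [moveEntry, hm, hm', Equiv.swap_apply_of_ne_of_ne hm' hm]

theorem moveEntry_apply_target (x : ι → ℝ) (i i' : ι) (s : ℝ) : moveEntry x i i' s i' = s :=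
  update_self ..

theorem support_moveEntry_subset (x : ι → ℝ) (i i' : ι) (s : ℝ) :
    support (moveEntry x i i' s) ⊆ insert i' (support x) := by
  intro m hm
  by_cases hm' : m = i'
  · exact Or.inl hm'
  by_cases hmi : m = i
  · subst hmi; simp [moveEntry, hm'] at hm
  · exact Or.inr (by simpa [moveEntry, hm', hmi] using hm)

theorem openSegment_inter_openSegment_moveEntry_nonempty {y z : ι → ℝ} {j l : ι} (hjl : j ≠ l)
    (hyj : y j = 0) (hyl : y l ≠ 0) (hzj : z j ≠ 0) (hzl : z l = 0) :
    (openSegment ℝ y z ∩ openSegment ℝ (moveEntry y l j (|y l| / |z j| * z j))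
      (moveEntry z j l (|z j| / |y l| * y l))).Nonempty := by
  have hβ : 0 < |y l| := abs_pos.2 hyl
  have hγ : 0 < |z j| := abs_pos.2 hzj
  have hab : |z j| / (|y l| + |z j|) + |y l| / (|y l| + |z j|) = 1 := by field_simp; ring
  -- the common point is `(|z j| • y + |y l| • z) / (|y l| + |z j|)`
  refine ⟨_, ⟨_, _, by positivity, by positivity, hab, rfl⟩,
    ⟨_, _, by positivity, by positivity, hab, ?_⟩⟩
  funext m
  by_cases hmj : m = j
  · subst hmj
    simp only [moveEntry, Pi.add_apply, Pi.smul_apply, smul_eq_mul, update_self, update_of_ne hjl,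
      hyj, mul_zero, add_zero, zero_add]
    field_simp
  by_cases hml : m = l
  · subst hml
    simp only [moveEntry, Pi.add_apply, Pi.smul_apply, smul_eq_mul, update_self, update_of_ne hmj,
      hzl, mul_zero, add_zero, zero_add]
    field_simp
  · simp [moveEntry, hmj, hml]

end SignedPerm

theorem Matrix.rank_diagonal_eq_ncard_support {m K : Type*} [Fintype m] [DecidableEq m] [Field K]
    [DecidableEq K] (w : m → K) : (diagonal w).rank = (support w).ncard := by
  rw [rank_diagonal, ← Nat.card_coe_set_eq, ← Nat.card_eq_fintype_card]
  rfl

section SparseDomainSet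

variable {n r : ℕ} {f : (Fin n → ℝ) → ℝ}

theorem diagonal_mem_sparseDomainSet_iff {x : Fin n → ℝ} :
    diagonal x ∈ sparseDomainSet n r f ↔ (support x).ncard ≤ r ∧ f x ≤ 0 := by
  classical
  simp [sparseDomainSet, rank_diagonal_eq_ncard_support]

theorem sparseDomainSet_mono {r' : ℕ} (h : r ≤ r') :
    sparseDomainSet n r f ⊆ sparseDomainSet n r' f :=
  fun _ ⟨hdiag, hrank, hf⟩ => ⟨hdiag, hrank.trans h, hf⟩

theorem sparseDomainSet_subset_range_diagonal :
    sparseDomainSet n r f ⊆ Set.range diagonal :=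
  fun _ hX => ⟨_, hX.1.symm⟩

theorem convexHull_sparseDomainSet_subset_range_diagonal :
    convexHull ℝ (sparseDomainSet n r f) ⊆ Set.range diagonal :=
  convexHull_min sparseDomainSet_subset_range_diagonal
    (LinearMap.range (diagonalLinearMap (Fin n) ℝ ℝ)).convex

theorem IsSignedPerm.diagonal_mem_sparseDomainSet
    (hf_symm : ∀ (x : Fin n → ℝ) (σ : Equiv.Perm (Fin n)), f (x ∘ σ) = f x)
    (hf_sign : ∀ x : Fin n → ℝ, f (fun i => |x i|) = f x) {x y : Fin n → ℝ}
    (h : IsSignedPerm x y) (hy : diagonal y ∈ sparseDomainSet n r f) :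
    diagonal x ∈ sparseDomainSet n r f := by
  rw [diagonal_mem_sparseDomainSet_iff] at hy ⊢
  rw [h.ncard_support_eq, h.apply_eq hf_symm hf_sign]
  exact hy

end SparseDomainSet

theorem Set.Nonempty.exists_max_ncard_support {ι K : Type*} [Finite ι] [Zero K] {s : Set (ι → K)}
    (hs : s.Nonempty) : ∃ y ∈ s, ∀ z ∈ s, (support z).ncard ≤ (support y).ncard := by
  obtain ⟨_, ⟨y, hy, rfl⟩, hmax⟩ :=
    Set.exists_max_image (support '' s) Set.ncard (Set.toFinite _) (hs.image support)
  exact ⟨y, hy, fun z hz => hmax _ ⟨z, hz, rfl⟩⟩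

theorem Matrix.diagonal_mem_openSegment {m 𝕜 : Type*} [DecidableEq m] [Semiring 𝕜] [PartialOrder 𝕜]
    {x y p : m → 𝕜} (h : p ∈ openSegment 𝕜 x y) :
    diagonal p ∈ openSegment 𝕜 (diagonal x) (diagonal y) := by
  obtain ⟨a, b, ha, hb, hab, rfl⟩ := h
  exact ⟨a, b, ha, hb, hab, by rw [← diagonal_smul, ← diagonal_smul, diagonal_add]; rfl⟩

theorem Matrix.ncard_le_finrank_direction_of_diagonal {ι K : Type*} [Fintype ι] [DecidableEq ι]
    [Field K] {F : Set (Matrix ι ι K)} {y : ι → K} (hy : diagonal y ∈ F) {J : Set ι}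
    (hJ : Disjoint J (support y))
    (hw : ∀ j ∈ J, ∃ w, diagonal w ∈ F ∧ w j ≠ 0 ∧ support w ⊆ insert j (support y)) :
    J.ncard ≤ Module.finrank K (affineSpan K F).direction := by
  classical
  choose! w hwF hwj hws using hw
  let u : J → (affineSpan K F).direction := fun j =>
    ⟨diagonal (w j) - diagonal y, AffineSubspace.vsub_mem_direction
      (subset_affineSpan K F (hwF j j.2)) (subset_affineSpan K F hy)⟩
  let π : (affineSpan K F).direction →ₗ[K] J → K :=
    LinearMap.funLeft K K Subtype.val ∘ₗ diagLinearMap ι K K ∘ₗ Submodule.subtype _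
  have hπ : ∀ j, π (u j) = Pi.single j (w j j) := by
    intro j
    funext i
    have hyi : y i = 0 := notMem_support.1 (hJ.notMem_of_mem_left i.2)
    by_cases hij : i = j
    · subst hij; simp [π, u, hyi]
    · have hwi : w j i = 0 := by
        by_contra hne
        rcases hws j j.2 hne with h | h
        · exact hij (Subtype.ext h)
        · exact h hyi
      simp [π, u, hyi, hwi, hij]
  have hli : LinearIndependent K u := by
    refine LinearIndependent.of_comp π ?_
    simpa only [Function.comp_def, hπ] using
      Pi.linearIndependent_single_of_ne_zero fun j : J => hwj j j.2
  rw [← Nat.card_coe_set_eq, Nat.card_eq_fintype_card]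
  exact hli.fintype_card_le_finrank

section Face

variable {n r : ℕ} {f : (Fin n → ℝ) → ℝ} {A F : Set (Matrix (Fin n) (Fin n) ℝ)}

theorem exists_exchange_mem_face
    (hf_symm : ∀ (x : Fin n → ℝ) (σ : Equiv.Perm (Fin n)), f (x ∘ σ) = f x)
    (hf_sign : ∀ x : Fin n → ℝ, f (fun i => |x i|) = f x)
    (hDA : sparseDomainSet n r f ⊆ A) (hAF : IsExtreme ℝ A F) (hF : Convex ℝ F)
    {y z : Fin n → ℝ} (hy : diagonal y ∈ sparseDomainSet n r f ∩ F)
    (hz : diagonal z ∈ sparseDomainSet n r f ∩ F)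
    (hcard : (support z).ncard ≤ (support y).ncard) {j : Fin n} (hzj : z j ≠ 0) (hyj : y j = 0) :
    ∃ w, diagonal w ∈ F ∧ w j ≠ 0 ∧ support w ⊆ insert j (support y) := by
  obtain ⟨l, hyl, hzl⟩ : ∃ l, y l ≠ 0 ∧ z l = 0 := by
    by_contra! h
    have hss : support y ⊂ support z :=
      Set.ssubset_iff_subset_ne.2 ⟨h, fun hyz => (show j ∈ support y by rw [hyz]; exact hzj) hyj⟩
    exact (Set.ncard_lt_ncard hss).not_ge hcard
  have hjl : j ≠ l := by rintro rfl; exact hyl hyj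
  have hβ : 0 < |y l| := abs_pos.2 hyl
  have hγ : 0 < |z j| := abs_pos.2 hzj
  have hy' : diagonal (moveEntry y l j (|y l| / |z j| * z j)) ∈ sparseDomainSet n r f := by
    refine (isSignedPerm_moveEntry hjl.symm hyj ?_).diagonal_mem_sparseDomainSet
      hf_symm hf_sign hy.1
    rw [abs_mul, abs_div, abs_abs, abs_abs, div_mul_cancel₀ _ hγ.ne']
  have hz' : diagonal (moveEntry z j l (|z j| / |y l| * y l)) ∈ sparseDomainSet n r f := by
    refine (isSignedPerm_moveEntry hjl hzl ?_).diagonal_mem_sparseDomainSet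
      hf_symm hf_sign hz.1
    rw [abs_mul, abs_div, abs_abs, abs_abs, div_mul_cancel₀ _ hβ.ne']
  obtain ⟨p, hp, hp'⟩ := openSegment_inter_openSegment_moveEntry_nonempty hjl hyj hyl hzj hzl
  have hpF : diagonal p ∈ F := hF.openSegment_subset hy.2 hz.2 (diagonal_mem_openSegment hp)
  refine ⟨_, hAF.left_mem_of_mem_openSegment (hDA hy') (hDA hz') hpF
    (diagonal_mem_openSegment hp'), ?_, support_moveEntry_subset ..⟩
  rw [moveEntry_apply_target]
  exact mul_ne_zero (div_pos hβ hγ).ne' hzj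

end Face

theorem face_rank_bound_diagonal_general
    (n k kTilde d : ℕ) (f : (Fin n → ℝ) → ℝ)
    (hf_symm : ∀ (x : Fin n → ℝ) (σ : Equiv.Perm (Fin n)), f (x ∘ σ) = f x)
    (hf_sign : ∀ x : Fin n → ℝ, f (fun i => |x i|) = f x)
    (hktk : kTilde ≤ k)
    (hconv : convexHull ℝ (sparseDomainSet n kTilde f)
      = convexHull ℝ (sparseDomainSet n k f))
    (Fd : Set (Matrix (Fin n) (Fin n) ℝ))
    (hFace : IsExtreme ℝ (convexHull ℝ (sparseDomainSet n k f)) Fd)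
    (hFconv : Convex ℝ Fd)
    (hFdim : Module.finrank ℝ (affineSpan ℝ Fd).direction = d) :
    ∀ X ∈ Fd, X.rank ≤ kTilde + d := by
  classical
  intro X hX
  set D := sparseDomainSet n kTilde f
  have hDA : D ⊆ convexHull ℝ (sparseDomainSet n k f) :=
    (sparseDomainSet_mono hktk).trans (subset_convexHull ℝ _)
  obtain ⟨x, rfl⟩ := convexHull_sparseDomainSet_subset_range_diagonal (hFace.subset hX)
  have hxD : diagonal x ∈ convexHull ℝ (D ∩ Fd) :=
    hFace.inter_convexHull_subset_convexHull_inter (convex_convexHull ℝ _) hDA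
      ⟨hX, hconv ▸ hFace.subset hX⟩
  obtain ⟨Y, hY⟩ := convexHull_nonempty_iff.1 ⟨_, hxD⟩
  obtain ⟨y₀, rfl⟩ := sparseDomainSet_subset_range_diagonal hY.1
  obtain ⟨y, hy, hmax⟩ :=
    (show (diagonal ⁻¹' (D ∩ Fd)).Nonempty from ⟨y₀, hY⟩).exists_max_ncard_support
  have hwit : ∀ j ∈ support x \ support y,
      ∃ w, diagonal w ∈ Fd ∧ w j ≠ 0 ∧ support w ⊆ insert j (support y) := by
    rintro j ⟨hxj, hyj⟩
    obtain ⟨Z, hZ, hZj⟩ := exists_mem_apply_ne_zero_of_mem_convexHull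
      (LinearMap.proj j ∘ₗ diagLinearMap (Fin n) ℝ ℝ) hxD (by simpa using hxj)
    obtain ⟨z, rfl⟩ := sparseDomainSet_subset_range_diagonal hZ.1
    exact exists_exchange_mem_face hf_symm hf_sign hDA hFace hFconv hy hZ
      (hmax z hZ) (by simpa using hZj) (notMem_support.1 hyj)
  have hJ := ncard_le_finrank_direction_of_diagonal hy.2 Set.disjoint_sdiff_left hwit
  rw [rank_diagonal_eq_ncard_support]
  calc (support x).ncard ≤ (support x \ support y).ncard + (support y).ncard :=
        Set.ncard_le_ncard_sdiff_add_ncard _ _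
    _ ≤ d + kTilde := add_le_add (hFdim ▸ hJ) (diagonal_mem_sparseDomainSet_iff.1 hy.1).1
    _ = kTilde + d := add_comm _ _

/-- **Theorem (rank bound for faces, diagonal matrix space, sign-invariant case).**
Let `D = {X ∈ 𝕊ⁿ : X diagonal, rank X ≤ k, f(diag X) ≤ 0}` with `f` continuous,
convex, symmetric (permutation-invariant) and sign-invariant (`f(x) = f(|x|)`),
and let `k̃ ≤ k` be the strengthened rank (smallest positive integer with
`conv D = conv D_{k̃}`).  If `F^d` is a `d`-dimensional face of `conv D`, then
every matrix in `F^d` has rank at most `k̃ + d`. -/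
theorem face_rank_bound_diagonal
    (n k kTilde d : ℕ) (f : (Fin n → ℝ) → ℝ)
    (hf_cont : Continuous f)
    (hf_convex : ConvexOn ℝ Set.univ f)
    (hf_symm : ∀ (x : Fin n → ℝ) (σ : Equiv.Perm (Fin n)), f (x ∘ σ) = f x)
    (hf_sign : ∀ x : Fin n → ℝ, f (fun i => |x i|) = f x)
    (hktpos : 1 ≤ kTilde) (hktk : kTilde ≤ k)
    (hconv : convexHull ℝ (sparseDomainSet n kTilde f)
      = convexHull ℝ (sparseDomainSet n k f))
    (hmin : ∀ j, 1 ≤ j →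
      convexHull ℝ (sparseDomainSet n j f)
        = convexHull ℝ (sparseDomainSet n k f) → kTilde ≤ j)
    (Fd : Set (Matrix (Fin n) (Fin n) ℝ))
    (hFace : IsExtreme ℝ (convexHull ℝ (sparseDomainSet n k f)) Fd)
    (hFconv : Convex ℝ Fd)
    (hFdim : Module.finrank ℝ (affineSpan ℝ Fd).direction = d) :
    ∀ X ∈ Fd, X.rank ≤ kTilde + d :=
  face_rank_bound_diagonal_general n k kTilde d f hf_symm hf_sign hktk hconv Fd hFace hFconv hFdim
end
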